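/- arXiv:1909.13237 — 9 statements merged into one kernel-verified Lean document; each statement's English description precedes it below -/
import Mathlib

section
/- Let S be an involutive R-matrix on H and R an involutive R-matrix on K. Then the box-sum S ⊞ R, defined as the operator on (H⊕K)⊗(H⊕K) ≅ (H⊗H) ⊕ (K⊗K) ⊕ (H⊗K) ⊕ (K⊗H) which acts as S on H⊗H, as R on K⊗K, and as the tensor flip on (H⊗K) ⊕ (K⊗H), is a unitary involutive solution of the Yang-Baxter equation on (H⊕K)⊗(H⊕K). -/
/-!
Split `(H ⊕ K)^{⊗ n}` into the sectors `X₁ ⊗ ⋯ ⊗ Xₙ` with each `Xᵢ ∈ {H, K}`. The box-sum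
maps each sector of `(H ⊕ K)^{⊗ 2}` onto a single sector, so selfadjointness and involutivity
reduce to those of `S`, of `R` and of the flip. On `(H ⊕ K)^{⊗ 3}` the Yang-Baxter equation is
that of `S` on `H^{⊗ 3}` and of `R` on `K^{⊗ 3}`; on a mixed sector, naturality of the flip
makes both sides the same permutation of the factors composed with a single copy of `S` or `R`.
-/

open Matrix

def S12 {ι : Type*} [DecidableEq ι] (S : Matrix (ι × ι) (ι × ι) ℂ) :
    Matrix (ι × ι × ι) (ι × ι × ι) ℂ :=
  Matrix.of fun x y => S (x.1, x.2.1) (y.1, y.2.1) * (if x.2.2 = y.2.2 then 1 else 0)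

def S23 {ι : Type*} [DecidableEq ι] (S : Matrix (ι × ι) (ι × ι) ℂ) :
    Matrix (ι × ι × ι) (ι × ι × ι) ℂ :=
  Matrix.of fun x y => (if x.1 = y.1 then 1 else 0) * S (x.2.1, x.2.2) (y.2.1, y.2.2)

def YangBaxter {ι : Type*} [Fintype ι] [DecidableEq ι]
    (S : Matrix (ι × ι) (ι × ι) ℂ) : Prop :=
  S12 S * S23 S * S12 S = S23 S * S12 S * S23 S

/-- An involutive R-matrix: a unitary involutive solution of the Yang-Baxter equation. -/
def IsRMatrix {ι : Type*} [Fintype ι] [DecidableEq ι]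
    (S : Matrix (ι × ι) (ι × ι) ℂ) : Prop :=
  Sᴴ = S ∧ S * S = 1 ∧ YangBaxter S

/-- The box-sum `S ⊞ R` on `(H ⊕ K) ⊗ (H ⊕ K)`: it acts as `S` on `H ⊗ H`, as `R` on
`K ⊗ K`, and as the tensor flip on `(H ⊗ K) ⊕ (K ⊗ H)`. -/
def boxSum {ι κ : Type*} [DecidableEq ι] [DecidableEq κ]
    (S : Matrix (ι × ι) (ι × ι) ℂ) (R : Matrix (κ × κ) (κ × κ) ℂ) :
    Matrix ((ι ⊕ κ) × (ι ⊕ κ)) ((ι ⊕ κ) × (ι ⊕ κ)) ℂ :=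
  Matrix.of fun x y =>
    match x, y with
    | (Sum.inl a, Sum.inl b), (Sum.inl c, Sum.inl d) => S (a, b) (c, d)
    | (Sum.inr a, Sum.inr b), (Sum.inr c, Sum.inr d) => R (a, b) (c, d)
    | (Sum.inl a, Sum.inr b), (Sum.inr c, Sum.inl d) => if a = d ∧ b = c then 1 else 0
    | (Sum.inr a, Sum.inl b), (Sum.inl c, Sum.inr d) => if a = d ∧ b = c then 1 else 0
    | _, _ => 0

section YangBaxter

variable {α : Type*} [Fintype α] [DecidableEq α]

lemma sum_sum_mul_apply_eq_ite {M N : Matrix (α × α) (α × α) ℂ} (h : M * N = 1) (a b c d : α) :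
    ∑ u₁, ∑ u₂, M (a, b) (u₁, u₂) * N (u₁, u₂) (c, d) = if a = c ∧ b = d then 1 else 0 := by
  simpa [mul_apply, Fintype.sum_prod_type, one_apply, Prod.ext_iff]
    using congrFun (congrFun h (a, b)) (c, d)

lemma S12_mul_S23_mul_S12_apply (M : Matrix (α × α) (α × α) ℂ) (x₁ x₂ x₃ y₁ y₂ y₃ : α) :
    (S12 M * S23 M * S12 M) (x₁, x₂, x₃) (y₁, y₂, y₃) =
      ∑ u₁, ∑ v, ∑ u₂, M (x₁, x₂) (u₁, u₂) * M (u₂, x₃) (v, y₃) * M (u₁, v) (y₁, y₂) := by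
  simp [mul_apply, S12, S23, Fintype.sum_prod_type, mul_ite, ite_mul, Finset.sum_mul]

lemma S23_mul_S12_mul_S23_apply (M : Matrix (α × α) (α × α) ℂ) (x₁ x₂ x₃ y₁ y₂ y₃ : α) :
    (S23 M * S12 M * S23 M) (x₁, x₂, x₃) (y₁, y₂, y₃) =
      ∑ v, ∑ u₂, ∑ u₁, M (x₂, x₃) (u₁, u₂) * M (x₁, u₁) (y₁, v) * M (v, u₂) (y₂, y₃) := by
  simp [mul_apply, S12, S23, Fintype.sum_prod_type, mul_ite, ite_mul, Finset.sum_mul]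

lemma YangBaxter.sum_eq {M : Matrix (α × α) (α × α) ℂ} (h : YangBaxter M)
    (x₁ x₂ x₃ y₁ y₂ y₃ : α) :
    ∑ u₁, ∑ v, ∑ u₂, M (x₁, x₂) (u₁, u₂) * M (u₂, x₃) (v, y₃) * M (u₁, v) (y₁, y₂) =
      ∑ v, ∑ u₂, ∑ u₁, M (x₂, x₃) (u₁, u₂) * M (x₁, u₁) (y₁, v) * M (v, u₂) (y₂, y₃) := by
  rw [← S12_mul_S23_mul_S12_apply, ← S23_mul_S12_mul_S23_apply, h]

end YangBaxter

section BoxSum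

variable {ι κ : Type*} [DecidableEq ι] [DecidableEq κ]

section Apply

variable (S : Matrix (ι × ι) (ι × ι) ℂ) (R : Matrix (κ × κ) (κ × κ) ℂ)

@[simp] lemma boxSum_apply_inl_inl (a b c d : ι) :
    boxSum S R (.inl a, .inl b) (.inl c, .inl d) = S (a, b) (c, d) := rfl

@[simp] lemma boxSum_apply_inr_inr (a b c d : κ) :
    boxSum S R (.inr a, .inr b) (.inr c, .inr d) = R (a, b) (c, d) := rfl

@[simp] lemma boxSum_apply_inl_inr (a d : ι) (b c : κ) :
    boxSum S R (.inl a, .inr b) (.inr c, .inl d) = if a = d ∧ b = c then 1 else 0 := rfl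

@[simp] lemma boxSum_apply_inr_inl (a d : κ) (b c : ι) :
    boxSum S R (.inr a, .inl b) (.inl c, .inr d) = if a = d ∧ b = c then 1 else 0 := rfl

-- All twelve vanishing entries, phrased via `isLeft` so that `simp` never unfolds the `match`.
@[simp] lemma boxSum_apply_of_isLeft_ne {x y : (ι ⊕ κ) × (ι ⊕ κ)}
    (h : x.1.isLeft ≠ y.2.isLeft ∨ x.2.isLeft ≠ y.1.isLeft) : boxSum S R x y = 0 := by
  obtain ⟨x₁ | x₁, x₂ | x₂⟩ := x <;> obtain ⟨y₁ | y₁, y₂ | y₂⟩ := y <;> simp_all [boxSum]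

lemma boxSum_conjTranspose : (boxSum S R)ᴴ = boxSum Sᴴ Rᴴ := by
  ext ⟨x₁ | x₁, x₂ | x₂⟩ ⟨y₁ | y₁, y₂ | y₂⟩ <;>
    simp [conjTranspose_apply, apply_ite (star : ℂ → ℂ), eq_comm, and_comm]

end Apply

variable [Fintype ι] [Fintype κ]

lemma boxSum_mul_boxSum_eq_one {S S' : Matrix (ι × ι) (ι × ι) ℂ}
    {R R' : Matrix (κ × κ) (κ × κ) ℂ} (hS : S * S' = 1) (hR : R * R' = 1) :
    boxSum S R * boxSum S' R' = 1 := by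
  ext ⟨x₁ | x₁, x₂ | x₂⟩ ⟨y₁ | y₁, y₂ | y₂⟩ <;>
    simp [mul_apply, Fintype.sum_prod_type, Fintype.sum_sum_type, mul_ite, ite_and, one_apply,
      Prod.ext_iff, sum_sum_mul_apply_eq_ite hS, sum_sum_mul_apply_eq_ite hR, and_comm]

theorem YangBaxter.boxSum {S : Matrix (ι × ι) (ι × ι) ℂ} {R : Matrix (κ × κ) (κ × κ) ℂ}
    (hS : YangBaxter S) (hR : YangBaxter R) : YangBaxter (boxSum S R) := by
  ext ⟨x₁ | x₁, x₂ | x₂, x₃ | x₃⟩ ⟨y₁ | y₁, y₂ | y₂, y₃ | y₃⟩ <;>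
    rw [S12_mul_S23_mul_S12_apply, S23_mul_S12_mul_S23_apply] <;>
    simp [Fintype.sum_sum_type, mul_ite, ite_mul, ite_and, hS.sum_eq, hR.sum_eq]

end BoxSum

/-- the box-sum of two involutive R-matrices is a unitary involutive
solution of the Yang-Baxter equation on `(H ⊕ K) ⊗ (H ⊕ K)`. -/
theorem statement2 {ι κ : Type*} [Fintype ι] [DecidableEq ι] [Fintype κ] [DecidableEq κ]
    (S : Matrix (ι × ι) (ι × ι) ℂ) (R : Matrix (κ × κ) (κ × κ) ℂ)
    (hS : IsRMatrix S) (hR : IsRMatrix R) : IsRMatrix (boxSum S R) := by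
  obtain ⟨hS_herm, hS_inv, hS_yb⟩ := hS
  obtain ⟨hR_herm, hR_inv, hR_yb⟩ := hR
  exact ⟨by rw [boxSum_conjTranspose, hS_herm, hR_herm],
    boxSum_mul_boxSum_eq_one hS_inv hR_inv, hS_yb.boxSum hR_yb⟩
end

section
/- Let S be an involutive R-matrix on H and R an involutive R-matrix on K. Then the box-product S ⊠ R := F₂ (S ⊗ R) F₂ on (H⊗K)⊗(H⊗K), where F₂ is the unitary exchanging the second and third tensor factors of H⊗K⊗H⊗K, is a unitary involutive solution of the Yang-Baxter equation on (H⊗K)⊗(H⊗K). -/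
/-!
Under the regrouping `((a, b), (c, d)) ↦ ((a, c), (b, d))` the box-product `S ⊠ R` is the
Kronecker product `S ⊗ R`, and under the analogous regrouping of three factors its legs
`(S ⊠ R)₁₂`, `(S ⊠ R)₂₃` are `S₁₂ ⊗ R₁₂`, `S₂₃ ⊗ R₂₃`. Reindexing along a bijection and the
Kronecker product both respect products, units and adjoints, so self-adjointness, involutivity
and the Yang-Baxter equation pass from the factors to `S ⊠ R`.
-/

open Matrix

/-- The box-product `S ⊠ R = F₂ (S ⊗ R) F₂` on `(H ⊗ K) ⊗ (H ⊗ K)`, where `F₂`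
exchanges the middle two tensor factors of `H ⊗ K ⊗ H ⊗ K`. In matrix elements:
`(S ⊠ R)^{(a,b)(c,d)}_{(a',b')(c',d')} = S^{ac}_{a'c'} R^{bd}_{b'd'}`. -/
def boxTimes {ι κ : Type*} (S : Matrix (ι × ι) (ι × ι) ℂ) (R : Matrix (κ × κ) (κ × κ) ℂ) :
    Matrix ((ι × κ) × (ι × κ)) ((ι × κ) × (ι × κ)) ℂ :=
  Matrix.of fun x y => S (x.1.1, x.2.1) (y.1.1, y.2.1) * R (x.1.2, x.2.2) (y.1.2, y.2.2)

open Kronecker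

def Equiv.prodTripleComm (ι κ : Type*) :
    (ι × κ) × (ι × κ) × (ι × κ) ≃ (ι × ι × ι) × (κ × κ × κ) :=
  (Equiv.prodCongr (Equiv.refl _) (Equiv.prodProdProdComm ι κ ι κ)).trans
    (Equiv.prodProdProdComm ι κ (ι × ι) (κ × κ))

section BoxTimes

variable {ι κ : Type*}

theorem boxTimes_eq_submatrix_kronecker (S : Matrix (ι × ι) (ι × ι) ℂ)
    (R : Matrix (κ × κ) (κ × κ) ℂ) :
    boxTimes S R =
      (S ⊗ₖ R).submatrix (Equiv.prodProdProdComm ι κ ι κ) (Equiv.prodProdProdComm ι κ ι κ) :=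
  rfl

theorem conjTranspose_boxTimes (S : Matrix (ι × ι) (ι × ι) ℂ) (R : Matrix (κ × κ) (κ × κ) ℂ) :
    (boxTimes S R)ᴴ = boxTimes Sᴴ Rᴴ := by
  rw [boxTimes_eq_submatrix_kronecker, conjTranspose_submatrix, conjTranspose_kronecker,
    boxTimes_eq_submatrix_kronecker]

theorem boxTimes_mul_boxTimes [Fintype ι] [Fintype κ] (S S' : Matrix (ι × ι) (ι × ι) ℂ)
    (R R' : Matrix (κ × κ) (κ × κ) ℂ) :
    boxTimes S R * boxTimes S' R' = boxTimes (S * S') (R * R') := by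
  simp only [boxTimes_eq_submatrix_kronecker, submatrix_mul_equiv, mul_kronecker_mul]

theorem boxTimes_one [DecidableEq ι] [DecidableEq κ] :
    boxTimes (1 : Matrix (ι × ι) (ι × ι) ℂ) (1 : Matrix (κ × κ) (κ × κ) ℂ) = 1 := by
  rw [boxTimes_eq_submatrix_kronecker, one_kronecker_one, submatrix_one_equiv]

theorem S12_boxTimes [DecidableEq ι] [DecidableEq κ] (S : Matrix (ι × ι) (ι × ι) ℂ)
    (R : Matrix (κ × κ) (κ × κ) ℂ) :
    S12 (boxTimes S R) =
      (S12 S ⊗ₖ S12 R).submatrix (Equiv.prodTripleComm ι κ) (Equiv.prodTripleComm ι κ) := by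
  ext x y
  simp only [S12, boxTimes, submatrix_apply, kroneckerMap_apply, of_apply, Equiv.prodTripleComm]
  split_ifs <;> simp_all [Prod.ext_iff]

theorem S23_boxTimes [DecidableEq ι] [DecidableEq κ] (S : Matrix (ι × ι) (ι × ι) ℂ)
    (R : Matrix (κ × κ) (κ × κ) ℂ) :
    S23 (boxTimes S R) =
      (S23 S ⊗ₖ S23 R).submatrix (Equiv.prodTripleComm ι κ) (Equiv.prodTripleComm ι κ) := by
  ext x y
  simp only [S23, boxTimes, submatrix_apply, kroneckerMap_apply, of_apply, Equiv.prodTripleComm]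
  split_ifs <;> simp_all [Prod.ext_iff]

theorem YangBaxter.boxTimes [Fintype ι] [DecidableEq ι] [Fintype κ] [DecidableEq κ]
    {S : Matrix (ι × ι) (ι × ι) ℂ} {R : Matrix (κ × κ) (κ × κ) ℂ}
    (hS : YangBaxter S) (hR : YangBaxter R) : YangBaxter (boxTimes S R) := by
  unfold YangBaxter at hS hR ⊢
  simp only [S12_boxTimes, S23_boxTimes, submatrix_mul_equiv, ← mul_kronecker_mul, hS, hR]

end BoxTimes

/-- the box-product of two involutive R-matrices is a unitary involutive
solution of the Yang-Baxter equation on `(H ⊗ K) ⊗ (H ⊗ K)`. -/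
theorem statement3 {ι κ : Type*} [Fintype ι] [DecidableEq ι] [Fintype κ] [DecidableEq κ]
    (S : Matrix (ι × ι) (ι × ι) ℂ) (R : Matrix (κ × κ) (κ × κ) ℂ)
    (hS : IsRMatrix S) (hR : IsRMatrix R) : IsRMatrix (boxTimes S R) := by
  obtain ⟨hS_adj, hS_inv, hS_yb⟩ := hS
  obtain ⟨hR_adj, hR_inv, hR_yb⟩ := hR
  exact ⟨by rw [conjTranspose_boxTimes, hS_adj, hR_adj],
    by rw [boxTimes_mul_boxTimes, hS_inv, hR_inv, boxTimes_one], hS_yb.boxTimes hR_yb⟩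
end

section
/- Let S ∈ R₀(H), R ∈ R₀(K) be involutive R-matrices and F the tensor flip on L⊗L for a Hilbert space L. Then under the natural identification ((H⊕K)⊗L)^{⊗2} ≅ ((H⊗L) ⊕ (K⊗L))^{⊗2}, one has the distributivity identity (S ⊞ R) ⊠ F = (S ⊠ F) ⊞ (R ⊠ F). -/
open Matrix

/-- The tensor flip `F` on `L ⊗ L`, as a matrix. -/
def flipMat (L : Type*) [DecidableEq L] : Matrix (L × L) (L × L) ℂ :=
  Matrix.of fun x y => if x.1 = y.2 ∧ x.2 = y.1 then 1 else 0

/-!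
Compare entries. Away from the four blocks on which `boxSum` is nonzero both sides vanish, and on
the blocks `S` and `R` they agree by definition. On the two mixed blocks the left side is a flip
tensored with `F`, which is again the flip of `(H ⊗ L) ⊗ (K ⊗ L)`.
-/

theorem ite_and_mul_flipMat {α β L : Type*} [DecidableEq α] [DecidableEq β] [DecidableEq L]
    (a d : α) (b c : β) (l₁ l₂ l₃ l₄ : L) :
    (if a = d ∧ b = c then 1 else 0) * flipMat L (l₁, l₂) (l₃, l₄) =
      if (a, l₁) = (d, l₄) ∧ (b, l₂) = (c, l₃) then 1 else 0 := by
  simp only [flipMat, of_apply, ite_zero_mul_ite_zero, mul_one, Prod.mk.injEq, and_and_and_comm]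

theorem statement4_general {ι κ L : Type*} [DecidableEq ι] [DecidableEq κ]
    [DecidableEq L]
    (S : Matrix (ι × ι) (ι × ι) ℂ) (R : Matrix (κ × κ) (κ × κ) ℂ) :
    boxTimes (boxSum S R) (flipMat L) =
      (boxSum (boxTimes S (flipMat L)) (boxTimes R (flipMat L))).submatrix
        (Prod.map (Equiv.sumProdDistrib ι κ L) (Equiv.sumProdDistrib ι κ L))
        (Prod.map (Equiv.sumProdDistrib ι κ L) (Equiv.sumProdDistrib ι κ L)) := by
  ext ⟨⟨a, l₁⟩, b, l₂⟩ ⟨⟨c, l₃⟩, d, l₄⟩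
  rcases a with a | a <;> rcases b with b | b <;> rcases c with c | c <;> rcases d with d | d <;>
    simp only [boxTimes, boxSum, submatrix_apply, Prod.map_apply, Equiv.sumProdDistrib_apply_left,
      Equiv.sumProdDistrib_apply_right, of_apply, zero_mul, ite_and_mul_flipMat]

/-- distributivity `(S ⊞ R) ⊠ F = (S ⊠ F) ⊞ (R ⊠ F)` under the natural
identification `((H ⊕ K) ⊗ L)^{⊗2} ≅ ((H ⊗ L) ⊕ (K ⊗ L))^{⊗2}`. -/
theorem statement4 {ι κ L : Type*} [Fintype ι] [DecidableEq ι] [Fintype κ] [DecidableEq κ]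
    [DecidableEq L]
    (S : Matrix (ι × ι) (ι × ι) ℂ) (R : Matrix (κ × κ) (κ × κ) ℂ)
    (hS : IsRMatrix S) (hR : IsRMatrix R) :
    boxTimes (boxSum S R) (flipMat L) =
      (boxSum (boxTimes S (flipMat L)) (boxTimes R (flipMat L))).submatrix
        (Prod.map (Equiv.sumProdDistrib ι κ L) (Equiv.sumProdDistrib ι κ L))
        (Prod.map (Equiv.sumProdDistrib ι κ L) (Equiv.sumProdDistrib ι κ L)) :=
  statement4_general S R
end

section
/- For involutive R-matrices S on H and R on K, the representation D_n^{S⊠R} of the symmetric group S_n on (H⊗K)^{⊗n} generated by S⊠R is unitarily equivalent (via the unitary U_n rearranging (H⊗K)^{⊗n} ≅ H^{⊗n}⊗K^{⊗n}) to the tensor product representation D_n^S ⊗ D_n^R, for every n. -/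
open Matrix Kronecker

/-- `S` acting on the `i`-th and `(i+1)`-st tensor slots of `H^{⊗ n}`. -/
def adjOp {ι : Type*} [Fintype ι] [DecidableEq ι] (S : Matrix (ι × ι) (ι × ι) ℂ)
    (n i : ℕ) (h : i + 1 < n) : Matrix (Fin n → ι) (Fin n → ι) ℂ :=
  Matrix.of fun f g =>
    S (f ⟨i, Nat.lt_of_succ_lt h⟩, f ⟨i + 1, h⟩) (g ⟨i, Nat.lt_of_succ_lt h⟩, g ⟨i + 1, h⟩) *
      ∏ j : Fin n, if j.1 = i ∨ j.1 = i + 1 then 1 else if f j = g j then 1 else 0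

/-- The rearrangement `U_n : (H ⊗ K)^{⊗ n} → H^{⊗ n} ⊗ K^{⊗ n}` on basis labels. -/
def rearr {ι κ : Type*} (n : ℕ) (x : Fin n → ι × κ) : (Fin n → ι) × (Fin n → κ) :=
  (fun j => (x j).1, fun j => (x j).2)

/-!
Both sides are representations of `S_n`, and the adjacent transpositions generate `S_n`, so it
suffices to compare them on those; there the claim is the entrywise identity
`D(S ⊠ R) = U (D S ⊗ D R) U⁻¹` for a single adjacent pair, since `S ⊠ R` acts on the
`H`- and `K`-labels independently.
-/

theorem adjOp_boxTimes {ι κ : Type*} [Fintype ι] [DecidableEq ι] [Fintype κ] [DecidableEq κ]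
    (S : Matrix (ι × ι) (ι × ι) ℂ) (R : Matrix (κ × κ) (κ × κ) ℂ) (n i : ℕ) (h : i + 1 < n) :
    adjOp (boxTimes S R) n i h =
      (adjOp S n i h ⊗ₖ adjOp R n i h).submatrix (rearr n) (rearr n) := by
  ext f g
  simp only [adjOp, boxTimes, submatrix_apply, kroneckerMap_apply, of_apply, rearr]
  rw [mul_mul_mul_comm, ← Finset.prod_mul_distrib]
  congr 1
  refine Finset.prod_congr rfl fun j _ => ?_
  by_cases hj : j.1 = i ∨ j.1 = i + 1
  · simp [hj]
  · simp only [hj, if_false, Prod.ext_iff, ite_and, ite_mul, one_mul, zero_mul]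

theorem Equiv.Perm.monoidHom_ext_swap_adjacent {M : Type*} [Monoid M] {n : ℕ}
    {f g : Equiv.Perm (Fin n) →* M}
    (h : ∀ (i : ℕ) (hi : i + 1 < n),
      f (Equiv.swap ⟨i, Nat.lt_of_succ_lt hi⟩ ⟨i + 1, hi⟩) =
        g (Equiv.swap ⟨i, Nat.lt_of_succ_lt hi⟩ ⟨i + 1, hi⟩)) :
    f = g := by
  cases n with
  | zero => exact MonoidHom.ext fun π => by rw [Subsingleton.elim π 1, map_one, map_one]
  | succ m =>
    refine MonoidHom.eq_of_eqOn_denseM (Equiv.Perm.mclosure_swap_castSucc_succ m) ?_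
    rintro _ ⟨i, rfl⟩
    exact h i (Nat.succ_lt_succ i.isLt)

@[simps]
def kroneckerRep {G α β γ R : Type*} [Monoid G] [Fintype α] [DecidableEq α] [Fintype β]
    [DecidableEq β] [Fintype γ] [DecidableEq γ] [CommSemiring R]
    (ρ : G →* Matrix α α R) (σ : G →* Matrix β β R) (e : γ ≃ α × β) :
    G →* Matrix γ γ R where
  toFun g := (ρ g ⊗ₖ σ g).submatrix e e
  map_one' := by simp only [map_one, one_kronecker_one, submatrix_one_equiv]
  map_mul' g h := by simp only [map_mul, mul_kronecker_mul, submatrix_mul_equiv]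

theorem statement5_general {ι κ : Type*} [Fintype ι] [DecidableEq ι] [Fintype κ] [DecidableEq κ]
    (S : Matrix (ι × ι) (ι × ι) ℂ) (R : Matrix (κ × κ) (κ × κ) ℂ)
    (n : ℕ)
    (DS : Equiv.Perm (Fin n) →* Matrix.unitaryGroup (Fin n → ι) ℂ)
    (DR : Equiv.Perm (Fin n) →* Matrix.unitaryGroup (Fin n → κ) ℂ)
    (DSR : Equiv.Perm (Fin n) →* Matrix.unitaryGroup (Fin n → ι × κ) ℂ)
    (hDS : ∀ (i : ℕ) (h : i + 1 < n),
      (DS (Equiv.swap ⟨i, Nat.lt_of_succ_lt h⟩ ⟨i + 1, h⟩) : Matrix _ _ ℂ) = adjOp S n i h)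
    (hDR : ∀ (i : ℕ) (h : i + 1 < n),
      (DR (Equiv.swap ⟨i, Nat.lt_of_succ_lt h⟩ ⟨i + 1, h⟩) : Matrix _ _ ℂ) = adjOp R n i h)
    (hDSR : ∀ (i : ℕ) (h : i + 1 < n),
      (DSR (Equiv.swap ⟨i, Nat.lt_of_succ_lt h⟩ ⟨i + 1, h⟩) : Matrix _ _ ℂ) =
        adjOp (boxTimes S R) n i h) :
    ∀ π : Equiv.Perm (Fin n),
      (DSR π : Matrix (Fin n → ι × κ) (Fin n → ι × κ) ℂ) =
        (((DS π : Matrix _ _ ℂ) ⊗ₖ (DR π : Matrix _ _ ℂ)).submatrix (rearr n) (rearr n)) := by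
  let U := Equiv.arrowProdEquivProdArrow (Fin n) (fun _ => ι) (fun _ => κ)
  have hU : ⇑U = rearr n := rfl
  have hrep : (unitaryGroup _ ℂ).subtype.comp DSR =
      kroneckerRep ((unitaryGroup _ ℂ).subtype.comp DS) ((unitaryGroup _ ℂ).subtype.comp DR) U :=
    Equiv.Perm.monoidHom_ext_swap_adjacent fun i hi => by
      simp only [MonoidHom.comp_apply, Submonoid.coe_subtype, kroneckerRep_apply, hU,
        hDSR i hi, hDS i hi, hDR i hi, adjOp_boxTimes]
  intro π
  exact DFunLike.congr_fun hrep π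

/-- the representation `D_n^{S ⊠ R}` of `S_n` on `(H ⊗ K)^{⊗ n}` is unitarily
equivalent, via the rearrangement unitary `U_n`, to the tensor (Kronecker) product
representation `D_n^S ⊗ D_n^R`. -/
theorem statement5 {ι κ : Type*} [Fintype ι] [DecidableEq ι] [Fintype κ] [DecidableEq κ]
    (S : Matrix (ι × ι) (ι × ι) ℂ) (R : Matrix (κ × κ) (κ × κ) ℂ)
    (hS : IsRMatrix S) (hR : IsRMatrix R) (n : ℕ)
    (DS : Equiv.Perm (Fin n) →* Matrix.unitaryGroup (Fin n → ι) ℂ)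
    (DR : Equiv.Perm (Fin n) →* Matrix.unitaryGroup (Fin n → κ) ℂ)
    (DSR : Equiv.Perm (Fin n) →* Matrix.unitaryGroup (Fin n → ι × κ) ℂ)
    (hDS : ∀ (i : ℕ) (h : i + 1 < n),
      (DS (Equiv.swap ⟨i, Nat.lt_of_succ_lt h⟩ ⟨i + 1, h⟩) : Matrix _ _ ℂ) = adjOp S n i h)
    (hDR : ∀ (i : ℕ) (h : i + 1 < n),
      (DR (Equiv.swap ⟨i, Nat.lt_of_succ_lt h⟩ ⟨i + 1, h⟩) : Matrix _ _ ℂ) = adjOp R n i h)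
    (hDSR : ∀ (i : ℕ) (h : i + 1 < n),
      (DSR (Equiv.swap ⟨i, Nat.lt_of_succ_lt h⟩ ⟨i + 1, h⟩) : Matrix _ _ ℂ) =
        adjOp (boxTimes S R) n i h) :
    ∀ π : Equiv.Perm (Fin n),
      (DSR π : Matrix (Fin n → ι × κ) (Fin n → ι × κ) ℂ) =
        (((DS π : Matrix _ _ ℂ) ⊗ₖ (DR π : Matrix _ _ ℂ)).submatrix (rearr n) (rearr n)) :=
  statement5_general S R n DS DR DSR hDS hDR hDSR
end

section
/- If Y_n^{S₁,S₂} intertwines the symmetric group representations D_n^{S₁} and D_n^{S₂} (i.e. Y_n D_n^{S₁}(π) = D_n^{S₂}(π) Y_n for all π ∈ S_n) and Y_n^{R₁,R₂} intertwines D_n^{R₁} and D_n^{R₂}, then U_n* (Y_n^{S₁,S₂} ⊗ Y_n^{R₁,R₂}) U_n is a unitary intertwiner between D_n^{S₁⊠R₁} and D_n^{S₂⊠R₂}. -/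
/-!
Conjugating by the rearrangement `U_n` turns the adjacent-swap operator of `S ⊠ R` into the
Kronecker product of the adjacent-swap operators of `S` and `R`. On an adjacent transposition the
required relation for `Y^S ⊗ Y^R` is therefore the Kronecker product of the two given relations.
Adjacent transpositions generate `S_n`, and the set of group elements intertwined by a fixed matrix
is closed under products, which gives the relation for all of `S_n`. Unitarity survives Kronecker
products and relabelling of indices.
-/

open Matrix Kronecker

namespace Matrix

variable {R : Type*} [CommSemiring R] {m m' n n' p q : Type*}

theorem submatrix_kronecker_conjTranspose_mul_self [StarRing R] [Fintype m] [Fintype m']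
    [DecidableEq n] [DecidableEq n'] [Fintype p] [DecidableEq q]
    {A : Matrix m n R} {B : Matrix m' n' R} (hA : Aᴴ * A = 1) (hB : Bᴴ * B = 1)
    (e : p ≃ m × m') (f : q ≃ n × n') :
    ((A ⊗ₖ B).submatrix e f)ᴴ * (A ⊗ₖ B).submatrix e f = 1 := by
  rw [conjTranspose_submatrix, conjTranspose_kronecker, submatrix_mul_equiv,
    ← mul_kronecker_mul, hA, hB, one_kronecker_one, submatrix_one_equiv]

theorem submatrix_kronecker_isUnitary [StarRing R] [Fintype m] [Fintype m'] [Fintype n]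
    [Fintype n'] [DecidableEq m] [DecidableEq m'] [DecidableEq n]
    [DecidableEq n'] [Fintype p] [DecidableEq p] [Fintype q] [DecidableEq q]
    {A : Matrix m n R} {B : Matrix m' n' R} (hA : Aᴴ * A = 1 ∧ A * Aᴴ = 1)
    (hB : Bᴴ * B = 1 ∧ B * Bᴴ = 1) (e : p ≃ m × m') (f : q ≃ n × n') :
    ((A ⊗ₖ B).submatrix e f)ᴴ * (A ⊗ₖ B).submatrix e f = 1 ∧
      (A ⊗ₖ B).submatrix e f * ((A ⊗ₖ B).submatrix e f)ᴴ = 1 := by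
  refine ⟨submatrix_kronecker_conjTranspose_mul_self hA.1 hB.1 e f, ?_⟩
  have hA' : Aᴴᴴ * Aᴴ = 1 := by rw [conjTranspose_conjTranspose, hA.2]
  have hB' : Bᴴᴴ * Bᴴ = 1 := by rw [conjTranspose_conjTranspose, hB.2]
  simpa only [conjTranspose_submatrix, conjTranspose_kronecker, conjTranspose_conjTranspose]
    using submatrix_kronecker_conjTranspose_mul_self hA' hB' f e

theorem submatrix_kronecker_intertwines [Fintype m] [Fintype m'] [Fintype n] [Fintype n']
    [Fintype p] [Fintype q] {Y₁ : Matrix m n R} {Y₂ : Matrix m' n' R}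
    {A₁ : Matrix n n R} {A₂ : Matrix m m R} {B₁ : Matrix n' n' R} {B₂ : Matrix m' m' R}
    (hA : Y₁ * A₁ = A₂ * Y₁) (hB : Y₂ * B₁ = B₂ * Y₂) (e : p ≃ m × m') (f : q ≃ n × n') :
    (Y₁ ⊗ₖ Y₂).submatrix e f * (A₁ ⊗ₖ B₁).submatrix f f =
      (A₂ ⊗ₖ B₂).submatrix e e * (Y₁ ⊗ₖ Y₂).submatrix e f := by
  rw [submatrix_mul_equiv, submatrix_mul_equiv, ← mul_kronecker_mul, ← mul_kronecker_mul, hA, hB]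

theorem intertwines_of_closure_eq_top [Fintype m] [DecidableEq m] [Fintype n] [DecidableEq n]
    {G : Type*} [Monoid G] {s : Set G}
    (hs : Submonoid.closure s = ⊤) {D₁ : G →* Matrix n n R} {D₂ : G →* Matrix m m R}
    {Z : Matrix m n R} (h : ∀ g ∈ s, Z * D₁ g = D₂ g * Z) (g : G) :
    Z * D₁ g = D₂ g * Z := by
  have hg : g ∈ Submonoid.closure s := hs ▸ Submonoid.mem_top g
  induction hg using Submonoid.closure_induction with
  | mem g hg => exact h g hg
  | one => simp only [map_one, Matrix.mul_one, Matrix.one_mul]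
  | mul g g' _ _ hg hg' => rw [map_mul, map_mul, ← Matrix.mul_assoc, hg, Matrix.mul_assoc, hg',
      Matrix.mul_assoc]

end Matrix

theorem Equiv.Perm.mclosure_adjacent_swaps (n : ℕ) :
    Submonoid.closure {σ : Perm (Fin n) | ∃ (i : ℕ) (h : i + 1 < n),
      σ = swap ⟨i, Nat.lt_of_succ_lt h⟩ ⟨i + 1, h⟩} = ⊤ := by
  cases n with
  | zero => exact Subsingleton.elim _ _
  | succ m =>
    refine top_le_iff.mp ?_
    rw [← mclosure_swap_castSucc_succ m]
    refine Submonoid.closure_mono ?_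
    rintro _ ⟨i, rfl⟩
    exact ⟨i, Nat.succ_lt_succ i.2, rfl⟩

theorem rearr_eq_arrowProdEquivProdArrow (ι κ : Type*) (n : ℕ) :
    (rearr n : (Fin n → ι × κ) → _) =
      Equiv.arrowProdEquivProdArrow (Fin n) (fun _ => ι) (fun _ => κ) :=
  rfl

theorem statement6_general {ι₁ ι₂ κ₁ κ₂ : Type*}
    [Fintype ι₁] [DecidableEq ι₁] [Fintype ι₂] [DecidableEq ι₂]
    [Fintype κ₁] [DecidableEq κ₁] [Fintype κ₂] [DecidableEq κ₂]
    (S₁ : Matrix (ι₁ × ι₁) (ι₁ × ι₁) ℂ) (S₂ : Matrix (ι₂ × ι₂) (ι₂ × ι₂) ℂ)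
    (R₁ : Matrix (κ₁ × κ₁) (κ₁ × κ₁) ℂ) (R₂ : Matrix (κ₂ × κ₂) (κ₂ × κ₂) ℂ)
    (n : ℕ)
    (DS₁ : Equiv.Perm (Fin n) →* Matrix.unitaryGroup (Fin n → ι₁) ℂ)
    (DS₂ : Equiv.Perm (Fin n) →* Matrix.unitaryGroup (Fin n → ι₂) ℂ)
    (DR₁ : Equiv.Perm (Fin n) →* Matrix.unitaryGroup (Fin n → κ₁) ℂ)
    (DR₂ : Equiv.Perm (Fin n) →* Matrix.unitaryGroup (Fin n → κ₂) ℂ)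
    (DSR₁ : Equiv.Perm (Fin n) →* Matrix.unitaryGroup (Fin n → ι₁ × κ₁) ℂ)
    (DSR₂ : Equiv.Perm (Fin n) →* Matrix.unitaryGroup (Fin n → ι₂ × κ₂) ℂ)
    (hDS₁ : ∀ (i : ℕ) (h : i + 1 < n),
      (DS₁ (Equiv.swap ⟨i, Nat.lt_of_succ_lt h⟩ ⟨i + 1, h⟩) : Matrix _ _ ℂ) = adjOp S₁ n i h)
    (hDS₂ : ∀ (i : ℕ) (h : i + 1 < n),
      (DS₂ (Equiv.swap ⟨i, Nat.lt_of_succ_lt h⟩ ⟨i + 1, h⟩) : Matrix _ _ ℂ) = adjOp S₂ n i h)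
    (hDR₁ : ∀ (i : ℕ) (h : i + 1 < n),
      (DR₁ (Equiv.swap ⟨i, Nat.lt_of_succ_lt h⟩ ⟨i + 1, h⟩) : Matrix _ _ ℂ) = adjOp R₁ n i h)
    (hDR₂ : ∀ (i : ℕ) (h : i + 1 < n),
      (DR₂ (Equiv.swap ⟨i, Nat.lt_of_succ_lt h⟩ ⟨i + 1, h⟩) : Matrix _ _ ℂ) = adjOp R₂ n i h)
    (hDSR₁ : ∀ (i : ℕ) (h : i + 1 < n),
      (DSR₁ (Equiv.swap ⟨i, Nat.lt_of_succ_lt h⟩ ⟨i + 1, h⟩) : Matrix _ _ ℂ) =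
        adjOp (boxTimes S₁ R₁) n i h)
    (hDSR₂ : ∀ (i : ℕ) (h : i + 1 < n),
      (DSR₂ (Equiv.swap ⟨i, Nat.lt_of_succ_lt h⟩ ⟨i + 1, h⟩) : Matrix _ _ ℂ) =
        adjOp (boxTimes S₂ R₂) n i h)
    (YS : Matrix (Fin n → ι₂) (Fin n → ι₁) ℂ) (YR : Matrix (Fin n → κ₂) (Fin n → κ₁) ℂ)
    (hYSunit : YSᴴ * YS = 1 ∧ YS * YSᴴ = 1) (hYRunit : YRᴴ * YR = 1 ∧ YR * YRᴴ = 1)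
    (hYS : ∀ π : Equiv.Perm (Fin n), YS * (DS₁ π : Matrix _ _ ℂ) = (DS₂ π : Matrix _ _ ℂ) * YS)
    (hYR : ∀ π : Equiv.Perm (Fin n), YR * (DR₁ π : Matrix _ _ ℂ) = (DR₂ π : Matrix _ _ ℂ) * YR) :
    ∀ Z : Matrix (Fin n → ι₂ × κ₂) (Fin n → ι₁ × κ₁) ℂ,
      Z = (YS ⊗ₖ YR).submatrix (rearr n) (rearr n) →
      (Zᴴ * Z = 1 ∧ Z * Zᴴ = 1) ∧
        ∀ π : Equiv.Perm (Fin n),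
          Z * (DSR₁ π : Matrix _ _ ℂ) = (DSR₂ π : Matrix _ _ ℂ) * Z := by
  rintro Z rfl
  rw [rearr_eq_arrowProdEquivProdArrow, rearr_eq_arrowProdEquivProdArrow]
  refine ⟨submatrix_kronecker_isUnitary hYSunit hYRunit _ _, fun π => ?_⟩
  refine intertwines_of_closure_eq_top (Equiv.Perm.mclosure_adjacent_swaps n)
    (D₁ := (unitary _).subtype.comp DSR₁) (D₂ := (unitary _).subtype.comp DSR₂) ?_ π
  rintro _ ⟨i, h, rfl⟩
  simp only [MonoidHom.comp_apply, Submonoid.coe_subtype]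
  rw [hDSR₁, hDSR₂, adjOp_boxTimes, adjOp_boxTimes, rearr_eq_arrowProdEquivProdArrow,
    rearr_eq_arrowProdEquivProdArrow, ← hDS₁, ← hDS₂, ← hDR₁, ← hDR₂]
  exact submatrix_kronecker_intertwines (hYS _) (hYR _) _ _

/-- if `Y_n^{S₁,S₂}` is a unitary intertwiner between `D_n^{S₁}` and `D_n^{S₂}`
and `Y_n^{R₁,R₂}` between `D_n^{R₁}` and `D_n^{R₂}`, then `U_n* (Y_n^{S₁,S₂} ⊗ Y_n^{R₁,R₂}) U_n`
is a unitary intertwiner between `D_n^{S₁ ⊠ R₁}` and `D_n^{S₂ ⊠ R₂}`. -/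
theorem statement6 {ι₁ ι₂ κ₁ κ₂ : Type*}
    [Fintype ι₁] [DecidableEq ι₁] [Fintype ι₂] [DecidableEq ι₂]
    [Fintype κ₁] [DecidableEq κ₁] [Fintype κ₂] [DecidableEq κ₂]
    (S₁ : Matrix (ι₁ × ι₁) (ι₁ × ι₁) ℂ) (S₂ : Matrix (ι₂ × ι₂) (ι₂ × ι₂) ℂ)
    (R₁ : Matrix (κ₁ × κ₁) (κ₁ × κ₁) ℂ) (R₂ : Matrix (κ₂ × κ₂) (κ₂ × κ₂) ℂ)
    (hS₁ : IsRMatrix S₁) (hS₂ : IsRMatrix S₂) (hR₁ : IsRMatrix R₁) (hR₂ : IsRMatrix R₂)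
    (n : ℕ)
    (DS₁ : Equiv.Perm (Fin n) →* Matrix.unitaryGroup (Fin n → ι₁) ℂ)
    (DS₂ : Equiv.Perm (Fin n) →* Matrix.unitaryGroup (Fin n → ι₂) ℂ)
    (DR₁ : Equiv.Perm (Fin n) →* Matrix.unitaryGroup (Fin n → κ₁) ℂ)
    (DR₂ : Equiv.Perm (Fin n) →* Matrix.unitaryGroup (Fin n → κ₂) ℂ)
    (DSR₁ : Equiv.Perm (Fin n) →* Matrix.unitaryGroup (Fin n → ι₁ × κ₁) ℂ)
    (DSR₂ : Equiv.Perm (Fin n) →* Matrix.unitaryGroup (Fin n → ι₂ × κ₂) ℂ)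
    (hDS₁ : ∀ (i : ℕ) (h : i + 1 < n),
      (DS₁ (Equiv.swap ⟨i, Nat.lt_of_succ_lt h⟩ ⟨i + 1, h⟩) : Matrix _ _ ℂ) = adjOp S₁ n i h)
    (hDS₂ : ∀ (i : ℕ) (h : i + 1 < n),
      (DS₂ (Equiv.swap ⟨i, Nat.lt_of_succ_lt h⟩ ⟨i + 1, h⟩) : Matrix _ _ ℂ) = adjOp S₂ n i h)
    (hDR₁ : ∀ (i : ℕ) (h : i + 1 < n),
      (DR₁ (Equiv.swap ⟨i, Nat.lt_of_succ_lt h⟩ ⟨i + 1, h⟩) : Matrix _ _ ℂ) = adjOp R₁ n i h)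
    (hDR₂ : ∀ (i : ℕ) (h : i + 1 < n),
      (DR₂ (Equiv.swap ⟨i, Nat.lt_of_succ_lt h⟩ ⟨i + 1, h⟩) : Matrix _ _ ℂ) = adjOp R₂ n i h)
    (hDSR₁ : ∀ (i : ℕ) (h : i + 1 < n),
      (DSR₁ (Equiv.swap ⟨i, Nat.lt_of_succ_lt h⟩ ⟨i + 1, h⟩) : Matrix _ _ ℂ) =
        adjOp (boxTimes S₁ R₁) n i h)
    (hDSR₂ : ∀ (i : ℕ) (h : i + 1 < n),
      (DSR₂ (Equiv.swap ⟨i, Nat.lt_of_succ_lt h⟩ ⟨i + 1, h⟩) : Matrix _ _ ℂ) =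
        adjOp (boxTimes S₂ R₂) n i h)
    (YS : Matrix (Fin n → ι₂) (Fin n → ι₁) ℂ) (YR : Matrix (Fin n → κ₂) (Fin n → κ₁) ℂ)
    (hYSunit : YSᴴ * YS = 1 ∧ YS * YSᴴ = 1) (hYRunit : YRᴴ * YR = 1 ∧ YR * YRᴴ = 1)
    (hYS : ∀ π : Equiv.Perm (Fin n), YS * (DS₁ π : Matrix _ _ ℂ) = (DS₂ π : Matrix _ _ ℂ) * YS)
    (hYR : ∀ π : Equiv.Perm (Fin n), YR * (DR₁ π : Matrix _ _ ℂ) = (DR₂ π : Matrix _ _ ℂ) * YR) :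
    ∀ Z : Matrix (Fin n → ι₂ × κ₂) (Fin n → ι₁ × κ₁) ℂ,
      Z = (YS ⊗ₖ YR).submatrix (rearr n) (rearr n) →
      (Zᴴ * Z = 1 ∧ Z * Zᴴ = 1) ∧
        ∀ π : Equiv.Perm (Fin n),
          Z * (DSR₁ π : Matrix _ _ ℂ) = (DSR₂ π : Matrix _ _ ℂ) * Z :=
  statement6_general S₁ S₂ R₁ R₂ n DS₁ DS₂ DR₁ DR₂ DSR₁ DSR₂ hDS₁ hDS₂ hDR₁ hDR₂ hDSR₁ hDSR₂ YS YR
    hYSunit hYRunit hYS hYR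
end

section
/- If Q is a unitary on H commuting with S in the sense [S, Q⊗Q] = 0, and R := (1⊗Q) S (1⊗Q*), then R is an involutive R-matrix and Y_n := 1 ⊗ Q ⊗ Q² ⊗ ⋯ ⊗ Q^{n-1} satisfies Y_n D_n^S(π) = D_n^R(π) Y_n for all π ∈ S_n. -/
open Matrix Kronecker

/-- `Y_n = 1 ⊗ Q ⊗ Q² ⊗ ⋯ ⊗ Q^{n-1}` as a matrix on `H^{⊗ n}`. -/
def powerTensor {ι : Type*} [Fintype ι] [DecidableEq ι] (Q : Matrix ι ι ℂ) (n : ℕ) :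
    Matrix (Fin n → ι) (Fin n → ι) ℂ :=
  Matrix.of fun f g => ∏ j : Fin n, (Q ^ (j : ℕ)) (f j) (g j)

/-!
With `U = 1 ⊗ Q` we have `R = U S U*`, and since `Q ⊗ Q` commutes with `S`, every
`Q^k ⊗ Q^(k+1) = U (Q ⊗ Q)^k` carries `S` to `R`. Conjugation by the unitary `U` preserves
hermiticity and involutivity, and the Yang–Baxter equation passes from `S` to `R` through
`W = 1 ⊗ Q ⊗ Q²`, which intertwines `S₁₂` with `R₁₂` (case `k = 0`) and `S₂₃` with `R₂₃`
(case `k = 1`). After splitting off the sites `i, i + 1` of `H^{⊗ n}`, `Y_n` becomes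
`(Q^i ⊗ Q^(i+1)) ⊗ (rest)` and the adjacent transposition becomes `S ⊗ 1`, so `Y_n` intertwines
the generators of `S_n`, hence all of `D_n^S` with `D_n^R`.
-/

open Equiv

theorem Matrix.kronecker_pow {α l m : Type*} [CommSemiring α] [Fintype l] [Fintype m]
    [DecidableEq l] [DecidableEq m] (A : Matrix l l α) (B : Matrix m m α) (k : ℕ) :
    (A ⊗ₖ B) ^ k = (A ^ k) ⊗ₖ (B ^ k) := by
  induction k with
  | zero => simp
  | succ k ih => rw [pow_succ, ih, ← mul_kronecker_mul, pow_succ, pow_succ]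

def Equiv.funSplitAtPair {α ι : Type*} [DecidableEq α] {a b : α} (hab : a ≠ b) :
    (α → ι) ≃ (ι × ι) × ({j // j ≠ a ∧ j ≠ b} → ι) where
  toFun f := ((f a, f b), fun j => f j)
  invFun p j := if ha : j = a then p.1.1 else if hb : j = b then p.1.2 else p.2 ⟨j, ha, hb⟩
  left_inv f := by
    funext j
    by_cases ha : j = a <;> by_cases hb : j = b <;> simp_all
  right_inv := by
    rintro ⟨⟨x, y⟩, r⟩
    simp only [dite_true, hab.symm, dite_false, Prod.mk.injEq, true_and]
    funext j
    simp [j.2.1, j.2.2]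

theorem Fintype.prod_eq_mul_mul_prod_subtype_ne_ne {α M : Type*} [Fintype α] [DecidableEq α]
    [CommMonoid M] (f : α → M) {a b : α} (hab : a ≠ b) :
    ∏ j, f j = f a * f b * ∏ j : {j // j ≠ a ∧ j ≠ b}, f j := by
  rw [← Finset.mul_prod_erase _ _ (Finset.mem_univ a),
    ← Finset.mul_prod_erase _ _ (by simpa using hab.symm : b ∈ Finset.univ.erase a), mul_assoc,
    Finset.prod_subtype (p := fun j => j ≠ a ∧ j ≠ b) _ (fun j => by simp [and_comm])]

theorem Fin.mk_ne_mk_add_one {n i : ℕ} (h : i + 1 < n) :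
    (⟨i, Nat.lt_of_succ_lt h⟩ : Fin n) ≠ ⟨i + 1, h⟩ := by
  simp [Fin.ext_iff]

def adjacentSplit (ι : Type*) {n i : ℕ} (h : i + 1 < n) :
    (Fin n → ι) ≃ (ι × ι) × ({j : Fin n // j ≠ ⟨i, Nat.lt_of_succ_lt h⟩ ∧ j ≠ ⟨i + 1, h⟩} → ι) :=
  funSplitAtPair (Fin.mk_ne_mk_add_one h)

theorem Equiv.Perm.mclosure_swap_mk_add_one (n : ℕ) :
    Submonoid.closure {σ : Perm (Fin n) |
      ∃ i, ∃ h : i + 1 < n, σ = swap ⟨i, Nat.lt_of_succ_lt h⟩ ⟨i + 1, h⟩} = ⊤ := by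
  cases n with
  | zero => exact eq_top_iff.2 fun σ _ => Subsingleton.elim σ 1 ▸ one_mem _
  | succ m =>
    refine eq_top_mono (Submonoid.closure_mono ?_) (mclosure_swap_castSucc_succ m)
    rintro _ ⟨i, rfl⟩
    exact ⟨i, Nat.succ_lt_succ i.2, rfl⟩

theorem MonoidHom.semiconjBy_of_mclosure_eq_top {G M : Type*} [Monoid G] [Monoid M] {s : Set G}
    (hs : Submonoid.closure s = ⊤) (f g : G →* M) (y : M)
    (h : ∀ x ∈ s, SemiconjBy y (f x) (g x)) (x : G) : SemiconjBy y (f x) (g x) := by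
  have hx : x ∈ Submonoid.closure s := hs ▸ Submonoid.mem_top x
  induction hx using Submonoid.closure_induction with
  | mem x hx => exact h x hx
  | one => simpa only [map_one] using SemiconjBy.one_right y
  | mul x x' _ _ hx hx' => simpa only [map_mul] using hx.mul_right hx'

section
variable {ι : Type*} [DecidableEq ι]

theorem S12_eq_submatrix_kronecker (A : Matrix (ι × ι) (ι × ι) ℂ) :
    S12 A =
      (A ⊗ₖ (1 : Matrix ι ι ℂ)).submatrix (prodAssoc ι ι ι).symm (prodAssoc ι ι ι).symm := by
  ext ⟨x₁, x₂, x₃⟩ ⟨y₁, y₂, y₃⟩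
  simp [S12, one_apply]

theorem S23_eq_one_kronecker (A : Matrix (ι × ι) (ι × ι) ℂ) : S23 A = (1 : Matrix ι ι ℂ) ⊗ₖ A := by
  ext ⟨x₁, x₂, x₃⟩ ⟨y₁, y₂, y₃⟩
  simp [S23, one_apply]

variable [Fintype ι]

theorem yangBaxter_of_intertwining {S R : Matrix (ι × ι) (ι × ι) ℂ}
    {W : Matrix (ι × ι × ι) (ι × ι × ι) ℂ} (hW : IsUnit W)
    (h12 : W * S12 S = S12 R * W) (h23 : W * S23 S = S23 R * W) (hS : YangBaxter S) :
    YangBaxter R := by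
  have h12' (X) : S12 R * (W * X) = W * (S12 S * X) := by rw [← mul_assoc, ← h12, mul_assoc]
  have h23' (X) : S23 R * (W * X) = W * (S23 S * X) := by rw [← mul_assoc, ← h23, mul_assoc]
  rw [YangBaxter, ← hW.mul_left_inj]
  calc S12 R * S23 R * S12 R * W = W * (S12 S * S23 S * S12 S) := by
        simp only [mul_assoc, ← h12, h12', h23']
    _ = W * (S23 S * S12 S * S23 S) := congrArg (W * ·) hS
    _ = S23 R * S12 R * S23 R * W := by
        simp only [mul_assoc, ← h23, h12', h23']

theorem adjOp_eq_submatrix (A : Matrix (ι × ι) (ι × ι) ℂ) {n i : ℕ} (h : i + 1 < n) :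
    adjOp A n i h = (A ⊗ₖ 1).submatrix (adjacentSplit ι h) (adjacentSplit ι h) := by
  ext f g
  have off_site (j : {j : Fin n // j ≠ ⟨i, Nat.lt_of_succ_lt h⟩ ∧ j ≠ ⟨i + 1, h⟩}) :
      ¬((j : ℕ) = i ∨ (j : ℕ) = i + 1) := by
    simpa [Fin.ext_iff] using j.2
  rw [adjOp, of_apply, Fintype.prod_eq_mul_mul_prod_subtype_ne_ne _ (Fin.mk_ne_mk_add_one h)]
  simp [off_site, Fintype.prod_boole, adjacentSplit, funSplitAtPair, one_apply, funext_iff]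

theorem powerTensor_eq_submatrix (Q : Matrix ι ι ℂ) {n i : ℕ} (h : i + 1 < n) :
    powerTensor Q n = ((Q ^ i) ⊗ₖ (Q ^ (i + 1)) ⊗ₖ
        of fun r s => ∏ j, (Q ^ (j.1 : ℕ)) (r j) (s j)).submatrix
      (adjacentSplit ι h) (adjacentSplit ι h) := by
  ext f g
  rw [powerTensor, of_apply,
    Fintype.prod_eq_mul_mul_prod_subtype_ne_ne _ (Fin.mk_ne_mk_add_one h)]
  simp [adjacentSplit, funSplitAtPair]

theorem powerTensor_mul_adjOp {Q : Matrix ι ι ℂ} {A B : Matrix (ι × ι) (ι × ι) ℂ} {n i : ℕ}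
    (h : i + 1 < n) (hAB : ((Q ^ i) ⊗ₖ (Q ^ (i + 1))) * A = B * ((Q ^ i) ⊗ₖ (Q ^ (i + 1)))) :
    powerTensor Q n * adjOp A n i h = adjOp B n i h * powerTensor Q n := by
  rw [adjOp_eq_submatrix, adjOp_eq_submatrix, powerTensor_eq_submatrix Q h, submatrix_mul_equiv,
    submatrix_mul_equiv, ← mul_kronecker_mul, ← mul_kronecker_mul, hAB, mul_one, one_mul]

variable {S R : Matrix (ι × ι) (ι × ι) ℂ} {Q : Matrix ι ι ℂ}

theorem mul_one_kronecker_of_eq_conj (hQ : Q ∈ unitaryGroup ι ℂ)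
    (hR : R = ((1 : Matrix ι ι ℂ) ⊗ₖ Q) * S * ((1 : Matrix ι ι ℂ) ⊗ₖ Qᴴ)) :
    R * ((1 : Matrix ι ι ℂ) ⊗ₖ Q) = ((1 : Matrix ι ι ℂ) ⊗ₖ Q) * S := by
  rw [hR, mul_assoc, ← mul_kronecker_mul, one_mul, ← star_eq_conjTranspose,
    Unitary.star_mul_self_of_mem hQ, one_kronecker_one, mul_one]

theorem kronecker_pow_succ_mul_of_eq_conj (hQ : Q ∈ unitaryGroup ι ℂ)
    (hcomm : (Q ⊗ₖ Q) * S = S * (Q ⊗ₖ Q))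
    (hR : R = ((1 : Matrix ι ι ℂ) ⊗ₖ Q) * S * ((1 : Matrix ι ι ℂ) ⊗ₖ Qᴴ)) (k : ℕ) :
    ((Q ^ k) ⊗ₖ (Q ^ (k + 1))) * S = R * ((Q ^ k) ⊗ₖ (Q ^ (k + 1))) := by
  have hsplit : (Q ^ k) ⊗ₖ (Q ^ (k + 1)) = ((1 : Matrix ι ι ℂ) ⊗ₖ Q) * (Q ⊗ₖ Q) ^ k := by
    rw [kronecker_pow, ← mul_kronecker_mul, one_mul, pow_succ']
  rw [hsplit, mul_assoc, (Commute.pow_left hcomm k).eq, ← mul_assoc,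
    ← mul_one_kronecker_of_eq_conj hQ hR, mul_assoc]

theorem isRMatrix_of_eq_conj (hS : IsRMatrix S) (hQ : Q ∈ unitaryGroup ι ℂ)
    (hcomm : (Q ⊗ₖ Q) * S = S * (Q ⊗ₖ Q))
    (hR : R = ((1 : Matrix ι ι ℂ) ⊗ₖ Q) * S * ((1 : Matrix ι ι ℂ) ⊗ₖ Qᴴ)) :
    IsRMatrix R := by
  obtain ⟨hS_herm, hS_inv, hS_yb⟩ := hS
  obtain ⟨U, hU, hR'⟩ : ∃ U ∈ unitaryGroup (ι × ι) ℂ, R = U * S * Uᴴ :=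
    ⟨_, kronecker_mem_unitary (one_mem _) hQ,
      by rw [hR, conjTranspose_kronecker, conjTranspose_one]⟩
  refine ⟨?_, ?_, ?_⟩
  · rw [hR', conjTranspose_mul, conjTranspose_mul, conjTranspose_conjTranspose, hS_herm, mul_assoc]
  · have hUU : Uᴴ * U = 1 := Unitary.star_mul_self_of_mem hU
    rw [hR']
    calc U * S * Uᴴ * (U * S * Uᴴ) = U * S * (Uᴴ * U) * S * Uᴴ := by simp only [mul_assoc]
      _ = 1 := by rw [hUU, mul_one, mul_assoc U S S, hS_inv, mul_one, ← star_eq_conjTranspose,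
        Unitary.mul_star_self_of_mem hU]
  · have hW : IsUnit ((1 : Matrix ι ι ℂ) ⊗ₖ (Q ⊗ₖ (Q ^ 2))) := Unitary.isUnit_coe (U := ⟨_,
      kronecker_mem_unitary (one_mem _) (kronecker_mem_unitary hQ (pow_mem hQ 2))⟩)
    refine yangBaxter_of_intertwining hW ?_ ?_ hS_yb
    · rw [← kronecker_assoc', S12_eq_submatrix_kronecker, S12_eq_submatrix_kronecker,
        submatrix_mul_equiv, submatrix_mul_equiv, ← mul_kronecker_mul, ← mul_kronecker_mul,
        ← mul_one_kronecker_of_eq_conj hQ hR, mul_one, one_mul]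
    · rw [S23_eq_one_kronecker, S23_eq_one_kronecker, ← mul_kronecker_mul, ← mul_kronecker_mul,
        one_mul]
      simpa using
        congrArg ((1 : Matrix ι ι ℂ) ⊗ₖ ·) (kronecker_pow_succ_mul_of_eq_conj hQ hcomm hR 1)

end

/-- type 2 equivalence: if `Q` is unitary with `[S, Q ⊗ Q] = 0` and
`R = (1 ⊗ Q) S (1 ⊗ Q*)`, then `R` is an involutive R-matrix and
`Y_n = 1 ⊗ Q ⊗ ⋯ ⊗ Q^{n-1}` intertwines `D_n^S` and `D_n^R`. -/
theorem statement8 {ι : Type*} [Fintype ι] [DecidableEq ι]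
    (S : Matrix (ι × ι) (ι × ι) ℂ) (hS : IsRMatrix S)
    (Q : Matrix ι ι ℂ) (hQ : Q ∈ Matrix.unitaryGroup ι ℂ)
    (hcomm : (Q ⊗ₖ Q) * S = S * (Q ⊗ₖ Q))
    (R : Matrix (ι × ι) (ι × ι) ℂ)
    (hR : R = ((1 : Matrix ι ι ℂ) ⊗ₖ Q) * S * ((1 : Matrix ι ι ℂ) ⊗ₖ Qᴴ)) :
    IsRMatrix R ∧
      ∀ (n : ℕ)
        (DS DR : Equiv.Perm (Fin n) →* Matrix.unitaryGroup (Fin n → ι) ℂ),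
        (∀ (i : ℕ) (h : i + 1 < n),
          (DS (Equiv.swap ⟨i, Nat.lt_of_succ_lt h⟩ ⟨i + 1, h⟩) : Matrix _ _ ℂ) =
            adjOp S n i h) →
        (∀ (i : ℕ) (h : i + 1 < n),
          (DR (Equiv.swap ⟨i, Nat.lt_of_succ_lt h⟩ ⟨i + 1, h⟩) : Matrix _ _ ℂ) =
            adjOp R n i h) →
        ∀ π : Equiv.Perm (Fin n),
          powerTensor Q n * (DS π : Matrix _ _ ℂ) =
            (DR π : Matrix _ _ ℂ) * powerTensor Q n := by
  refine ⟨isRMatrix_of_eq_conj hS hQ hcomm hR, fun n DS DR hDS hDR π => ?_⟩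
  refine MonoidHom.semiconjBy_of_mclosure_eq_top (Perm.mclosure_swap_mk_add_one n)
    ((unitaryGroup _ ℂ).subtype.comp DS) ((unitaryGroup _ ℂ).subtype.comp DR) _ ?_ π
  rintro _ ⟨i, h, rfl⟩
  change powerTensor Q n * (DS _ : Matrix _ _ ℂ) = (DR _ : Matrix _ _ ℂ) * powerTensor Q n
  rw [hDS, hDR]
  exact powerTensor_mul_adjOp h (kronecker_pow_succ_mul_of_eq_conj hQ hcomm hR i)
end

section
/- In the Fock representation of an involutive R-matrix S on H (with internal space L), the creation operators z*_S(ψ), defined on n-particle vectors by z*_S(ψ) Φ_n = √(n+1) P_{n+1}^S (ψ ⊗ Φ_n), satisfy the exchange relation z*_{S,α}(f) z*_{S,β}(g) = Σ_{γ,δ} S^{γδ}_{αβ} z*_{S,γ}(g) z*_{S,δ}(f) on the finite-particle subspace. -/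
open Matrix

/-- The (finite-particle part of the) `n`-particle space `H^{⊗ n} ⊗ L^{⊗ n}`, where `H` has
orthonormal basis indexed by `ι` and `L` has orthonormal basis indexed by `κ`: formal finite
linear combinations of elementary basis tensors. -/
abbrev NPart (ι κ : Type*) (n : ℕ) := ((Fin n → ι) × (Fin n → κ)) →₀ ℂ

/-- The action of `S_F = S ⊗ F_L` on the `i`-th and `(i+1)`-st slots of
`H^{⊗ n} ⊗ L^{⊗ n}`: `S` mixes the `ι`-labels of slots `i, i+1` while the `κ`-labels of
these two slots are flipped. This is `D_n^{S_F}(τ_i)`. -/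
noncomputable def adjAct {ι κ : Type*} [Fintype ι] (S : Matrix (ι × ι) (ι × ι) ℂ)
    (n i : ℕ) (h : i + 1 < n) : NPart ι κ n →ₗ[ℂ] NPart ι κ n :=
  Finsupp.lsum ℂ fun x => LinearMap.toSpanSingleton ℂ _
    (∑ c : ι, ∑ d : ι,
      S (c, d) (x.1 ⟨i, Nat.lt_of_succ_lt h⟩, x.1 ⟨i + 1, h⟩) •
        Finsupp.single
          (Function.update (Function.update x.1 ⟨i, Nat.lt_of_succ_lt h⟩ c) ⟨i + 1, h⟩ d,
            x.2 ∘ Equiv.swap ⟨i, Nat.lt_of_succ_lt h⟩ ⟨i + 1, h⟩) (1 : ℂ))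

/-- The mean projection `P_n^S = (1/n!) Σ_{π ∈ S_n} D_n(π)` of a representation `D`. -/
noncomputable def meanProj {ι κ : Type*}
    (D : ∀ n : ℕ, Equiv.Perm (Fin n) →* Module.End ℂ (NPart ι κ n)) (n : ℕ) :
    Module.End ℂ (NPart ι κ n) :=
  ((n.factorial : ℂ)⁻¹) • ∑ π : Equiv.Perm (Fin n), D n π

/-- Tensoring `(e_α ⊗ f)` in front: the map `Φ_n ↦ (e_α ⊗ f) ⊗ Φ_n` from
`H^{⊗ n} ⊗ L^{⊗ n}` to `H^{⊗ (n+1)} ⊗ L^{⊗ (n+1)}` (with the `H`- and `L`-parts kept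
disentangled). -/
noncomputable def prepend {ι κ : Type*} (α : ι) (f : κ →₀ ℂ) (n : ℕ) :
    NPart ι κ n →ₗ[ℂ] NPart ι κ (n + 1) :=
  Finsupp.lsum ℂ fun x => LinearMap.toSpanSingleton ℂ _
    (f.sum fun k c => c • Finsupp.single (Fin.cons α x.1, Fin.cons k x.2) (1 : ℂ))

/-- The Zamolodchikov creation operator
`z*_{S,α}(f) Φ_n = √(n+1) P_{n+1}^S ((e_α ⊗ f) ⊗ Φ_n)`. -/
noncomputable def creOp {ι κ : Type*}
    (D : ∀ n : ℕ, Equiv.Perm (Fin n) →* Module.End ℂ (NPart ι κ n)) (n : ℕ)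
    (α : ι) (f : κ →₀ ℂ) : NPart ι κ n →ₗ[ℂ] NPart ι κ (n + 1) :=
  ((Real.sqrt (n + 1) : ℝ) : ℂ) •
    ((meanProj D (n + 1) : NPart ι κ (n + 1) →ₗ[ℂ] NPart ι κ (n + 1)).comp (prepend α f n))


/-! Tensoring `e_γ ⊗ f` in front intertwines `D_m(π)` with `D_{m+1}` of the shifted permutation
(checked on adjacent transpositions, which generate `S_m`), and `P_{m+1}` absorbs every
`D_{m+1}(σ)`; hence `P_{m+1} ((e_γ ⊗ f) ⊗ P_m Φ) = P_{m+1} ((e_γ ⊗ f) ⊗ Φ)` and both sides of the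
exchange relation become `√(n+1) √(n+2) P_{n+2}` applied to two prepended one-particle vectors.
Writing `P_{n+2} = P_{n+2} (S₁ ⊗ F₁)`, the factor `S_F` on the first two slots turns
`(e_α ⊗ f) ⊗ (e_β ⊗ g)` into `Σ S^{γδ}_{αβ} (e_γ ⊗ g) ⊗ (e_δ ⊗ f)`. -/

namespace Fin

variable {m : ℕ} {X : Type*}

theorem cons_comp_swap_succ (k : X) (v : Fin m → X) (a b : Fin m) :
    (cons k v : Fin (m + 1) → X) ∘ Equiv.swap a.succ b.succ = cons k (v ∘ Equiv.swap a b) := by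
  funext j
  cases j using Fin.cases with
  | zero =>
      simp [Equiv.swap_apply_of_ne_of_ne (succ_ne_zero a).symm (succ_ne_zero b).symm]
  | succ t => simp [(succ_injective m).swap_apply a b t]

theorem cons_cons_comp_swap_zero_one (a b : X) (v : Fin m → X) :
    (cons a (cons b v) : Fin (m + 2) → X) ∘ Equiv.swap 0 (succ 0) = cons b (cons a v) := by
  funext j
  cases j using Fin.cases with
  | zero => rfl
  | succ t =>
      cases t using Fin.cases with
      | zero => rfl
      | succ s =>
          have hs : Equiv.swap (0 : Fin (m + 2)) (succ 0) s.succ.succ = s.succ.succ :=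
            Equiv.swap_apply_of_ne_of_ne (succ_ne_zero _) (by simp [Fin.ext_iff])
          simp only [Function.comp_apply, hs, cons_succ]

end Fin

section Fock

variable {ι κ : Type*}

theorem prepend_single (α : ι) (f : κ →₀ ℂ) (n : ℕ) (x : (Fin n → ι) × (Fin n → κ)) :
    prepend α f n (Finsupp.single x 1) =
      f.sum fun k c => c • Finsupp.single (Fin.cons α x.1, Fin.cons k x.2) 1 := by
  simp [prepend]

theorem prepend_single_single (α : ι) (k : κ) (a : ℂ) (n : ℕ)
    (x : (Fin n → ι) × (Fin n → κ)) :
    prepend α (Finsupp.single k a) n (Finsupp.single x 1) =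
      a • Finsupp.single (Fin.cons α x.1, Fin.cons k x.2) 1 := by
  rw [prepend_single]
  exact Finsupp.sum_single_index (zero_smul ℂ _)

theorem prepend_zero (α : ι) (n : ℕ) : prepend (κ := κ) α 0 n = 0 :=
  Finsupp.lhom_ext' fun x => LinearMap.ext_ring (by simp [prepend_single])

theorem prepend_add (α : ι) (f f' : κ →₀ ℂ) (n : ℕ) :
    prepend α (f + f') n = prepend α f n + prepend α f' n :=
  Finsupp.lhom_ext' fun x => LinearMap.ext_ring <| by
    simp only [LinearMap.comp_apply, Finsupp.lsingle_apply, LinearMap.add_apply, prepend_single]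
    exact Finsupp.sum_add_index' (by simp) (by simp [add_smul])

theorem meanProj_mul (D : ∀ n : ℕ, Equiv.Perm (Fin n) →* Module.End ℂ (NPart ι κ n)) (m : ℕ)
    (π : Equiv.Perm (Fin m)) : meanProj D m * D m π = meanProj D m := by
  rw [meanProj, smul_mul_assoc, Finset.sum_mul]
  simp only [← map_mul]
  exact congrArg _ (Equiv.sum_comp (Equiv.mulRight π) (D m))

theorem comp_meanProj_of_comp_eq {M : Type*} [AddCommMonoid M] [Module ℂ M]
    (D : ∀ n : ℕ, Equiv.Perm (Fin n) →* Module.End ℂ (NPart ι κ n)) {m : ℕ}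
    (T : NPart ι κ m →ₗ[ℂ] M) (hT : ∀ π, T ∘ₗ D m π = T) : T ∘ₗ meanProj D m = T := by
  refine LinearMap.ext fun x => ?_
  have hTx : ∀ π, T (D m π x) = T x := fun π => LinearMap.congr_fun (hT π) x
  simp only [meanProj, LinearMap.comp_apply, LinearMap.smul_apply, LinearMap.coe_sum,
    Finset.sum_apply, map_smul, map_sum, hTx, Finset.sum_const, Finset.card_univ,
    Fintype.card_perm, Fintype.card_fin, ← Nat.cast_smul_eq_nsmul ℂ, smul_smul]
  rw [inv_mul_cancel₀ (Nat.cast_ne_zero.mpr m.factorial_ne_zero), one_smul]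

variable [Fintype ι]

def IsGeneratedByAdjAct (S : Matrix (ι × ι) (ι × ι) ℂ)
    (D : ∀ n : ℕ, Equiv.Perm (Fin n) →* Module.End ℂ (NPart ι κ n)) : Prop :=
  ∀ (n i : ℕ) (h : i + 1 < n),
    (D n (Equiv.swap ⟨i, Nat.lt_of_succ_lt h⟩ ⟨i + 1, h⟩) : NPart ι κ n →ₗ[ℂ] NPart ι κ n) =
      adjAct S n i h

theorem adjAct_single (S : Matrix (ι × ι) (ι × ι) ℂ) (n i : ℕ) (h : i + 1 < n)
    (x : (Fin n → ι) × (Fin n → κ)) :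
    adjAct S n i h (Finsupp.single x 1) =
      ∑ c : ι, ∑ d : ι,
        S (c, d) (x.1 ⟨i, Nat.lt_of_succ_lt h⟩, x.1 ⟨i + 1, h⟩) •
          Finsupp.single
            (Function.update (Function.update x.1 ⟨i, Nat.lt_of_succ_lt h⟩ c) ⟨i + 1, h⟩ d,
              x.2 ∘ Equiv.swap ⟨i, Nat.lt_of_succ_lt h⟩ ⟨i + 1, h⟩) 1 := by
  simp [adjAct]

theorem adjAct_succ_single_cons (S : Matrix (ι × ι) (ι × ι) ℂ) (m i : ℕ) (h : i + 1 < m)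
    (γ : ι) (k : κ) (v : Fin m → ι) (w : Fin m → κ) :
    adjAct S (m + 1) (i + 1) (Nat.succ_lt_succ h)
        (Finsupp.single (Fin.cons γ v, Fin.cons k w) 1) =
      ∑ c : ι, ∑ d : ι,
        S (c, d) (v ⟨i, Nat.lt_of_succ_lt h⟩, v ⟨i + 1, h⟩) •
          Finsupp.single
            (Fin.cons γ
                (Function.update (Function.update v ⟨i, Nat.lt_of_succ_lt h⟩ c) ⟨i + 1, h⟩ d),
              Fin.cons k (w ∘ Equiv.swap ⟨i, Nat.lt_of_succ_lt h⟩ ⟨i + 1, h⟩)) 1 := by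
  have succ_mk : ∀ (j : ℕ) (hj : j + 1 < m + 1), (⟨j + 1, hj⟩ : Fin (m + 1)) =
      Fin.succ ⟨j, Nat.succ_lt_succ_iff.mp hj⟩ := fun _ _ => rfl
  rw [adjAct_single]
  simp only [succ_mk, Fin.cons_succ, Fin.cons_update, Fin.cons_comp_swap_succ]

theorem adjAct_zero_single_cons_cons (S : Matrix (ι × ι) (ι × ι) ℂ) (m : ℕ)
    (h : 0 + 1 < m + 1 + 1) (a b : ι) (k k' : κ) (v : Fin m → ι) (w : Fin m → κ) :
    adjAct S (m + 1 + 1) 0 h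
        (Finsupp.single (Fin.cons a (Fin.cons b v), Fin.cons k (Fin.cons k' w)) 1) =
      ∑ c : ι, ∑ d : ι, S (c, d) (a, b) •
        Finsupp.single (Fin.cons c (Fin.cons d v), Fin.cons k' (Fin.cons k w)) 1 := by
  rw [adjAct_single]
  have one_mk : (⟨0 + 1, h⟩ : Fin (m + 1 + 1)) = Fin.succ 0 := rfl
  simp only [Fin.zero_eta, one_mk, Fin.cons_zero, Fin.cons_succ, Fin.update_cons_zero,
    ← Fin.cons_update, Fin.cons_cons_comp_swap_zero_one]

theorem prepend_comp_adjAct (S : Matrix (ι × ι) (ι × ι) ℂ) (γ : ι) (f : κ →₀ ℂ) (m i : ℕ)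
    (h : i + 1 < m) :
    prepend γ f m ∘ₗ adjAct S m i h =
      adjAct S (m + 1) (i + 1) (Nat.succ_lt_succ h) ∘ₗ prepend γ f m := by
  induction f using Finsupp.induction_linear with
  | zero => simp [prepend_zero]
  | add f f' hf hf' => rw [prepend_add, LinearMap.add_comp, LinearMap.comp_add, hf, hf']
  | single k a =>
      refine Finsupp.lhom_ext' fun x => LinearMap.ext_ring ?_
      simp only [LinearMap.comp_apply, Finsupp.lsingle_apply, map_smul, prepend_single_single]
      rw [adjAct_succ_single_cons S m i h]
      simp only [adjAct_single, map_sum, map_smul, prepend_single_single, Finset.smul_sum]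
      exact Fintype.sum_congr _ _ fun c => Fintype.sum_congr _ _ fun d => smul_comm _ _ _

theorem adjAct_zero_comp_prepend_comp_prepend (S : Matrix (ι × ι) (ι × ι) ℂ) (α β : ι)
    (f g : κ →₀ ℂ) (m : ℕ) (h : 0 + 1 < m + 1 + 1) :
    adjAct S (m + 1 + 1) 0 h ∘ₗ (prepend α f (m + 1) ∘ₗ prepend β g m) =
      ∑ γ : ι, ∑ δ : ι, S (γ, δ) (α, β) • (prepend γ g (m + 1) ∘ₗ prepend δ f m) := by
  induction f using Finsupp.induction_linear with
  | zero => simp [prepend_zero]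
  | add f f' hf hf' =>
      simp only [prepend_add, LinearMap.add_comp, LinearMap.comp_add, hf, hf', smul_add,
        Finset.sum_add_distrib]
  | single k a =>
      induction g using Finsupp.induction_linear with
      | zero => simp [prepend_zero]
      | add g g' hg hg' =>
          simp only [prepend_add, LinearMap.add_comp, LinearMap.comp_add, hg, hg', smul_add,
            Finset.sum_add_distrib]
      | single k' b =>
          refine Finsupp.lhom_ext' fun x => LinearMap.ext_ring ?_
          simp only [LinearMap.comp_apply, Finsupp.lsingle_apply, LinearMap.sum_apply,
            LinearMap.smul_apply, prepend_single_single, map_smul,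
            adjAct_zero_single_cons_cons, Finset.smul_sum, smul_smul]
          exact Fintype.sum_congr _ _ fun c => Fintype.sum_congr _ _ fun d => by
            congr 1; ring

theorem comp_eq_of_comp_adjAct_eq {M : Type*} [AddCommMonoid M] [Module ℂ M]
    {S : Matrix (ι × ι) (ι × ι) ℂ}
    {D : ∀ n : ℕ, Equiv.Perm (Fin n) →* Module.End ℂ (NPart ι κ n)} (hD : IsGeneratedByAdjAct S D)
    {m : ℕ} (T : NPart ι κ m →ₗ[ℂ] M) (hT : ∀ i (h : i + 1 < m), T ∘ₗ adjAct S m i h = T)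
    (π : Equiv.Perm (Fin m)) : T ∘ₗ D m π = T := by
  cases m with
  | zero => rw [Subsingleton.elim π 1, map_one]; rfl
  | succ m =>
      have hπ :
          π ∈ Submonoid.closure (Set.range fun i : Fin m => Equiv.swap i.castSucc i.succ) :=
        Equiv.Perm.mclosure_swap_castSucc_succ m ▸ Submonoid.mem_top π
      induction hπ using Submonoid.closure_induction with
      | mem g hg =>
          obtain ⟨j, rfl⟩ := hg
          exact (congrArg _ (hD _ j (Nat.succ_lt_succ j.isLt))).trans (hT _ _)
      | one => rw [map_one]; rfl
      | mul a b _ _ ha hb =>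
          rw [map_mul, Module.End.mul_eq_comp, ← LinearMap.comp_assoc, ha, hb]

theorem meanProj_comp_prepend_comp_meanProj {S : Matrix (ι × ι) (ι × ι) ℂ}
    {D : ∀ n : ℕ, Equiv.Perm (Fin n) →* Module.End ℂ (NPart ι κ n)} (hD : IsGeneratedByAdjAct S D)
    (γ : ι) (f : κ →₀ ℂ) (m : ℕ) :
    (meanProj D (m + 1) ∘ₗ prepend γ f m) ∘ₗ meanProj D m =
      meanProj D (m + 1) ∘ₗ prepend γ f m :=
  comp_meanProj_of_comp_eq D _ <| comp_eq_of_comp_adjAct_eq hD _ fun i h => by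
    rw [LinearMap.comp_assoc, prepend_comp_adjAct, ← LinearMap.comp_assoc, ← hD,
      ← Module.End.mul_eq_comp, meanProj_mul]

theorem creOp_comp_creOp {S : Matrix (ι × ι) (ι × ι) ℂ}
    {D : ∀ n : ℕ, Equiv.Perm (Fin n) →* Module.End ℂ (NPart ι κ n)} (hD : IsGeneratedByAdjAct S D)
    (n : ℕ) (α β : ι) (f g : κ →₀ ℂ) :
    creOp D (n + 1) α f ∘ₗ creOp D n β g =
      ((√(n + 1) * √(n + 1 + 1) : ℝ) : ℂ) •
        (meanProj D (n + 1 + 1) ∘ₗ (prepend α f (n + 1) ∘ₗ prepend β g n)) := by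
  simp only [creOp, LinearMap.smul_comp, LinearMap.comp_smul, smul_smul,
    ← LinearMap.comp_assoc, meanProj_comp_prepend_comp_meanProj hD]
  push_cast
  rfl

end Fock

theorem statement11_general {ι κ : Type*} [Fintype ι]
    (S : Matrix (ι × ι) (ι × ι) ℂ)
    (D : ∀ n : ℕ, Equiv.Perm (Fin n) →* Module.End ℂ (NPart ι κ n))
    (hD : ∀ (n i : ℕ) (h : i + 1 < n),
      (D n (Equiv.swap ⟨i, Nat.lt_of_succ_lt h⟩ ⟨i + 1, h⟩) :
          NPart ι κ n →ₗ[ℂ] NPart ι κ n) = adjAct S n i h)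
    (n : ℕ) (α β : ι) (f g : κ →₀ ℂ) :
    (creOp D (n + 1) α f).comp (creOp D n β g) =
      ∑ γ : ι, ∑ δ : ι,
        S (γ, δ) (α, β) • ((creOp D (n + 1) γ g).comp (creOp D n δ f)) := by
  have h : 0 + 1 < n + 1 + 1 := by omega
  have hP : meanProj D (n + 1 + 1) ∘ₗ adjAct S (n + 1 + 1) 0 h = meanProj D (n + 1 + 1) := by
    rw [← hD, ← Module.End.mul_eq_comp, meanProj_mul]
  simp only [creOp_comp_creOp hD]
  conv_lhs => rw [← hP, LinearMap.comp_assoc, adjAct_zero_comp_prepend_comp_prepend]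
  refine LinearMap.ext fun x => ?_
  simp [Finset.smul_sum, smul_smul, mul_comm]

/-- the creation operators of the Fock representation of an involutive R-matrix
`S` satisfy the exchange relation
`z*_{S,α}(f) z*_{S,β}(g) = Σ_{γ,δ} S^{γδ}_{αβ} z*_{S,γ}(g) z*_{S,δ}(f)`
on the finite-particle subspace. -/
theorem statement11 {ι κ : Type*} [Fintype ι] [DecidableEq ι]
    (S : Matrix (ι × ι) (ι × ι) ℂ) (hS : IsRMatrix S)
    (D : ∀ n : ℕ, Equiv.Perm (Fin n) →* Module.End ℂ (NPart ι κ n))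
    (hD : ∀ (n i : ℕ) (h : i + 1 < n),
      (D n (Equiv.swap ⟨i, Nat.lt_of_succ_lt h⟩ ⟨i + 1, h⟩) :
          NPart ι κ n →ₗ[ℂ] NPart ι κ n) = adjAct S n i h)
    (n : ℕ) (α β : ι) (f g : κ →₀ ℂ) :
    (creOp D (n + 1) α f).comp (creOp D n β g) =
      ∑ γ : ι, ∑ δ : ι,
        S (γ, δ) (α, β) • ((creOp D (n + 1) γ g).comp (creOp D n δ f)) :=
  statement11_general S D hD n α β f g
end

section
/- An involutive R-matrix of normal form S = ⊞_{i=1}^N ε_i · id_{H_i⊗H_i} (with signs ε_i ∈ {±1} and dim H_i = d_i) is crossing symmetric, i.e. S^{αβ}_{δγ} = S^{δα}_{γβ} for all basis indices, if and only if d_i = 1 for all i (S is diagonal). -/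
/-! Inside a block `H_i ⊗ H_i` the normal form is `ε_i · id`, whose crossing partner
`ε_i δ^δ_γ δ^α_β` differs from it as soon as `dim H_i > 1` (compare the entries at
`α = β ≠ γ = δ`). When every `d_i = 1`, a basis vector is determined by its block label, and
crossing symmetry becomes a case check on the labels of the four indices. -/

open Matrix

/-- The normal-form involutive R-matrix `⊞_{i=1}^N ε_i · id_{H_i ⊗ H_i}` on
`H = ⊕_i H_i` with `dim H_i = d i`, w.r.t. an adapted orthonormal basis indexed by
`Σ i, Fin (d i)`: it acts as `ε_i · id` on `H_i ⊗ H_i` and as the tensor flip on the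
mixed components `H_i ⊗ H_j`, `i ≠ j`. -/
def normalForm (N : ℕ) (d : Fin N → ℕ) (ε : Fin N → ℂ) :
    Matrix ((Σ i : Fin N, Fin (d i)) × (Σ i : Fin N, Fin (d i)))
      ((Σ i : Fin N, Fin (d i)) × (Σ i : Fin N, Fin (d i))) ℂ :=
  Matrix.of fun x y =>
    if y.1.1 = y.2.1 then (if x = y then ε y.1.1 else 0)
    else (if x.1 = y.2 ∧ x.2 = y.1 then 1 else 0)

/-- Crossing symmetry `S^{αβ}_{δγ} = S^{δα}_{γβ}` of a constant R-matrix, in terms of its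
matrix elements `S^{αβ}_{δγ} = ⟨e_α ⊗ e_β, S (e_δ ⊗ e_γ)⟩`. -/
def CrossingSymmetric {α : Type*} (S : Matrix (α × α) (α × α) ℂ) : Prop :=
  ∀ a b c d : α, S (a, b) (d, c) = S (d, a) (c, b)

variable {N : ℕ} {d : Fin N → ℕ} {ε : Fin N → ℂ}

theorem normalForm_not_crossingSymmetric {i : Fin N} (hε : ε i ≠ 0) (hd : 2 ≤ d i) :
    ¬ CrossingSymmetric (normalForm N d ε) := by
  intro h
  let e₀ : Σ i : Fin N, Fin (d i) := ⟨i, ⟨0, by omega⟩⟩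
  let e₁ : Σ i : Fin N, Fin (d i) := ⟨i, ⟨1, by omega⟩⟩
  have he : e₀ ≠ e₁ := by simp [e₀, e₁]
  have := h e₀ e₀ e₁ e₁
  simp only [normalForm, of_apply, Prod.mk.injEq, he, he.symm, and_false, if_false] at this
  exact hε (by simpa [e₀, e₁] using this.symm)

theorem normalForm_apply_of_subsingleton [∀ i, Subsingleton (Fin (d i))]
    (x y : (Σ i : Fin N, Fin (d i)) × (Σ i : Fin N, Fin (d i))) :
    normalForm N d ε x y =
      if y.1.1 = y.2.1 then (if x.1.1 = y.1.1 ∧ x.2.1 = y.2.1 then ε y.1.1 else 0)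
      else (if x.1.1 = y.2.1 ∧ x.2.1 = y.1.1 then 1 else 0) := by
  simp only [normalForm, of_apply, Prod.ext_iff, Sigma.fst_injective.eq_iff]

theorem normalForm_crossingSymmetric [∀ i, Subsingleton (Fin (d i))] :
    CrossingSymmetric (normalForm N d ε) := by
  intro a b c e
  simp only [normalForm_apply_of_subsingleton]
  split_ifs <;> grind

/-- a normal-form involutive R-matrix `⊞_i ε_i 1_{d_i²}` (with signs
`ε_i ∈ {±1}`) is crossing symmetric if and only if it is diagonal, i.e. `d_i = 1` for
all `i`. -/
theorem statement15 (N : ℕ) (d : Fin N → ℕ) (hd : ∀ i, 0 < d i)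
    (ε : Fin N → ℂ) (hε : ∀ i, ε i = 1 ∨ ε i = -1) :
    CrossingSymmetric (normalForm N d ε) ↔ ∀ i, d i = 1 := by
  refine ⟨fun h i => ?_, fun h => ?_⟩
  · by_contra hne
    have hεi : ε i ≠ 0 := by rcases hε i with h' | h' <;> simp [h']
    exact normalForm_not_crossingSymmetric hεi (by have := hd i; omega) h
  · have : ∀ i, Subsingleton (Fin (d i)) := fun i => Fin.subsingleton_iff_le_one.mpr (h i).le
    exact normalForm_crossingSymmetric
end

section
/- A bounded analytic function F on the strip S(0,π), continuous up to the boundary, non-vanishing, bounded below in modulus, of unit modulus on the real line, and satisfying F(θ+iπ) = 1/F(θ) for real θ, extends via F(ζ) := 1/conj(F(conj ζ)) on the lower strip to a bounded, 2πi-periodic entire function, and is therefore constant. -/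
/-!
Phragmén–Lindelöf in the strip `0 ≤ Im ζ ≤ π`, applied to the bounded functions `F` and `1/F`,
shows that `|F| ≤ 1` and `|1/F| ≤ 1` there, because both have modulus one on the two edges
(on the upper edge by `F(θ + iπ) F(θ) = 1`). Hence `|F| = 1` on the whole strip, and by the
maximum modulus principle `F` is a constant `c` with `|c| = 1`. The constant function `c` is then
the required entire extension, since `1 / conj c = c`.
-/

open Complex Set

section HorizontalStrip

variable {a b : ℝ}

/-- Boundedness is the growth condition of `PhragmenLindelof.horizontal_strip` with `B = 0`,
where the majorant `exp (0 * exp (c |Re z|))` is `1`. -/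
theorem norm_le_of_bounded_on_horizontal_strip {E : Type*} [NormedAddCommGroup E]
    [NormedSpace ℂ E] {f : ℂ → E} {B C : ℝ} {z : ℂ}
    (hfd : DiffContOnCl ℂ f (im ⁻¹' Ioo a b)) (hB : ∀ w ∈ im ⁻¹' Ioo a b, ‖f w‖ ≤ B)
    (hle_a : ∀ w : ℂ, w.im = a → ‖f w‖ ≤ C) (hle_b : ∀ w : ℂ, w.im = b → ‖f w‖ ≤ C)
    (hz : z ∈ im ⁻¹' Icc a b) : ‖f z‖ ≤ C := by
  refine PhragmenLindelof.horizontal_strip hfd ⟨Real.pi / (b - a) - 1, by linarith, 0, ?_⟩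
    hle_a hle_b hz.1 hz.2
  refine Asymptotics.IsBigO.of_bound B
    (Filter.eventually_inf_principal.2 (Filter.Eventually.of_forall fun w hw => ?_))
  simpa using hB w hw

theorem norm_eq_one_on_horizontal_strip {f : ℂ → ℂ} {K M : ℝ} {z : ℂ} (hK : 0 < K)
    (hfd : DiffContOnCl ℂ f (im ⁻¹' Ioo a b))
    (hbd : ∀ w ∈ im ⁻¹' Icc a b, K ≤ ‖f w‖ ∧ ‖f w‖ ≤ M)
    (ha : ∀ w : ℂ, w.im = a → ‖f w‖ = 1) (hb : ∀ w : ℂ, w.im = b → ‖f w‖ = 1)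
    (hz : z ∈ im ⁻¹' Icc a b) : ‖f z‖ = 1 := by
  have hclosure : closure (im ⁻¹' Ioo a b) ⊆ im ⁻¹' Icc a b := by
    rw [closure_preimage_im]
    exact preimage_mono (closure_minimal Ioo_subset_Icc_self isClosed_Icc)
  have hpos : ∀ w ∈ im ⁻¹' Icc a b, 0 < ‖f w‖ := fun w hw => hK.trans_le (hbd w hw).1
  have hle : ‖f z‖ ≤ 1 :=
    norm_le_of_bounded_on_horizontal_strip hfd
      (fun w hw => (hbd w (Ioo_subset_Icc_self hw)).2)
      (fun w hw => (ha w hw).le) (fun w hw => (hb w hw).le) hz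
  have hinv_le : ‖(f z)⁻¹‖ ≤ 1 :=
    norm_le_of_bounded_on_horizontal_strip (f := f⁻¹)
      (hfd.inv fun w hw => norm_pos_iff.1 (hpos w (hclosure hw)))
      (fun w hw => by
        simpa using inv_anti₀ hK (hbd w (Ioo_subset_Icc_self hw)).1)
      (fun w hw => by simp [ha w hw]) (fun w hw => by simp [hb w hw]) hz
  rw [norm_inv, inv_le_one₀ (hpos z hz)] at hinv_le
  exact hle.antisymm hinv_le

end HorizontalStrip

theorem norm_eq_one_of_im_eq_zero {F : ℂ → ℂ} (hmod : ∀ θ : ℝ, ‖F θ‖ = 1) (w : ℂ)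
    (hw : w.im = 0) : ‖F w‖ = 1 := by
  have hw : (w.re : ℂ) = w := Complex.ext (by simp) (by simp [hw])
  simpa [hw] using hmod w.re

theorem norm_eq_one_of_im_eq_pi {F : ℂ → ℂ} (hmod : ∀ θ : ℝ, ‖F θ‖ = 1)
    (hper : ∀ θ : ℝ, F (θ + Real.pi * I) * F θ = 1) (w : ℂ) (hw : w.im = Real.pi) :
    ‖F w‖ = 1 := by
  have hw : w = w.re + Real.pi * I := by apply Complex.ext <;> simp [hw]
  simpa [hmod, ← hw] using congrArg norm (hper w.re)

/-- a bounded analytic function `F` on the strip `S(0,π)`, continuous up to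
the boundary, bounded below in modulus, of unit modulus on the real line and satisfying
`F(θ+iπ)·F(θ) = 1` for real `θ`, extends via the Schwarz reflection
`F(ζ) := 1/conj(F(conj ζ))` to a bounded `2πi`-periodic entire function, and is therefore
constant. -/
theorem statement18 (F : ℂ → ℂ) (K M : ℝ) (hK : 0 < K)
    (hdiff : DifferentiableOn ℂ F {ζ : ℂ | 0 < ζ.im ∧ ζ.im < Real.pi})
    (hcont : ContinuousOn F {ζ : ℂ | 0 ≤ ζ.im ∧ ζ.im ≤ Real.pi})
    (hbd : ∀ ζ ∈ {ζ : ℂ | 0 ≤ ζ.im ∧ ζ.im ≤ Real.pi},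
      K ≤ ‖F ζ‖ ∧ ‖F ζ‖ ≤ M)
    (hmod : ∀ θ : ℝ, ‖F θ‖ = 1)
    (hper : ∀ θ : ℝ, F (θ + Real.pi * I) * F θ = 1) :
    ∃ (Fext : ℂ → ℂ) (c : ℂ),
      Differentiable ℂ Fext ∧
      (∀ ζ : ℂ, 0 ≤ ζ.im → ζ.im ≤ Real.pi → Fext ζ = F ζ) ∧
      (∀ ζ : ℂ, -Real.pi ≤ ζ.im → ζ.im ≤ 0 →
        Fext ζ = (starRingEnd ℂ (F (starRingEnd ℂ ζ)))⁻¹) ∧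
      (∃ B : ℝ, ∀ ζ : ℂ, ‖Fext ζ‖ ≤ B) ∧
      (∀ ζ : ℂ, Fext (ζ + 2 * Real.pi * I) = Fext ζ) ∧
      (∀ ζ : ℂ, Fext ζ = c) := by
  have hclosure : closure (im ⁻¹' Ioo 0 Real.pi) = im ⁻¹' Icc 0 Real.pi := by
    rw [closure_preimage_im, closure_Ioo Real.pi_pos.ne]
  have hF : DiffContOnCl ℂ F (im ⁻¹' Ioo 0 Real.pi) := ⟨hdiff, hclosure ▸ hcont⟩
  have hnorm : ∀ z ∈ im ⁻¹' Icc 0 Real.pi, ‖F z‖ = 1 := fun z hz =>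
    norm_eq_one_on_horizontal_strip hK hF hbd (norm_eq_one_of_im_eq_zero hmod)
      (norm_eq_one_of_im_eq_pi hmod hper) hz
  set z₀ : ℂ := (Real.pi / 2 : ℝ) * I
  have hz₀ : z₀ ∈ im ⁻¹' Ioo 0 Real.pi := by
    simp only [z₀, mem_preimage, mul_im, ofReal_re, I_im, ofReal_im, I_re]
    constructor <;> linarith [Real.pi_pos]
  have hconst : ∀ z ∈ im ⁻¹' Icc 0 Real.pi, F z = F z₀ := fun z hz =>
    Complex.eqOn_closure_of_isPreconnected_of_isMaxOn_norm
      ((convex_Ioo 0 Real.pi).linear_preimage imLm).isPreconnected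
      (isOpen_Ioo.preimage continuous_im) hF hz₀
      (fun w hw => by simp [hnorm w (Ioo_subset_Icc_self hw), hnorm z₀ (Ioo_subset_Icc_self hz₀)])
      (hclosure ▸ hz)
  have hc : ‖F z₀‖ = 1 := hnorm z₀ (Ioo_subset_Icc_self hz₀)
  refine ⟨fun _ => F z₀, F z₀, differentiable_const _, fun ζ hlo hhi => (hconst ζ ⟨hlo, hhi⟩).symm,
    fun ζ hlo hhi => ?_, ⟨1, fun _ => hc.le⟩, fun _ => rfl, fun _ => rfl⟩
  have hconj : starRingEnd ℂ ζ ∈ im ⁻¹' Icc 0 Real.pi := by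
    simp only [mem_preimage, conj_im, mem_Icc]
    constructor <;> linarith
  rw [hconst _ hconj, inv_eq_conj (by simpa using hc), conj_conj]
end
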